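/- arXiv:2101.12440 — 6 statements merged into one kernel-verified Lean document; each statement's English description precedes it below -/
import Mathlib

section
/- For n ≥ 2 and r ≥ 3n+2, set s = r(3n+2)+3. Then the four integers s, s+3, s+3n+1, s+3n+2 have greatest common divisor 1 and minimally generate the numerical semigroup they generate. -/
/-- For `n ≥ 2`, `r ≥ 3n+2`, `s = r(3n+2)+3`, the integers
`s, s+3, s+3n+1, s+3n+2` have gcd `1` and minimally generate the numerical
semigroup they generate: no generator is a nonnegative integer combination of
the others. -/
theorem backelin_generators_minimal (n r : ℕ) (hn : 2 ≤ n) (hr : 3 * n + 2 ≤ r) :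
    letI s : ℕ := r * (3 * n + 2) + 3
    letI a : Fin 4 → ℕ := ![s, s + 3, s + 3 * n + 1, s + 3 * n + 2]
    Nat.gcd (a 0) (Nat.gcd (a 1) (Nat.gcd (a 2) (a 3))) = 1 ∧
      ∀ i : Fin 4, a i ∉ AddSubmonoid.closure (a '' {j | j ≠ i}) := by
  set s : ℕ := r * (3 * n + 2) + 3 with hs_def
  set a : Fin 4 → ℕ := ![s, s + 3, s + 3 * n + 1, s + 3 * n + 2] with ha_def
  have hs_big : 3 * n + 2 < s := by
    have h1 : 3 * n + 2 ≤ r * (3 * n + 2) := Nat.le_mul_of_pos_left _ (by omega)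
    omega
  have ha : ∀ j : Fin 4, s ≤ a j ∧ a j ≤ s + 3 * n + 2 := by
    intro j
    fin_cases j <;> simp [ha_def] <;> omega
  have hinj : Function.Injective a := by
    intro x y hxy
    fin_cases x <;> fin_cases y <;>
      first
        | rfl
        | (rw [ha_def] at hxy; simp at hxy; try omega)
  constructor
  · have h : a 3 = a 2 + 1 := by simp [ha_def] <;> omega
    rw [h, Nat.gcd_self_add_right, Nat.gcd_one_right, Nat.gcd_one_right,
      Nat.gcd_one_right]
  · intro i hi
    set S : Set ℕ := a '' {j | j ≠ i} with hS
    have key : ∀ x ∈ S, s ≤ x := by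
      rintro x ⟨j, -, rfl⟩
      exact (ha j).1
    let M : AddSubmonoid ℕ :=
      { carrier := {x | x = 0 ∨ x ∈ S ∨ 2 * s ≤ x}
        zero_mem' := Or.inl rfl
        add_mem' := by
          rintro x y hx hy
          rcases hx with rfl | hx
          · simpa using hy
          rcases hy with rfl | hy
          · exact Or.inr (by simpa using hx)
          · right; right
            have hx' : s ≤ x := by
              rcases hx with hx | hx
              · exact key x hx
              · omega
            have hy' : s ≤ y := by
              rcases hy with hy | hy
              · exact key y hy
              · omega
            omega }
    have hsub : AddSubmonoid.closure S ≤ M :=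
      AddSubmonoid.closure_le.2 (fun x hx => Or.inr (Or.inl hx))
    rcases hsub hi with h0 | hS' | h2
    · have := (ha i).1; omega
    · obtain ⟨j, hj, hja⟩ := hS'
      exact hj (hinj hja)
    · have := (ha i).2; omega
end

section
/- With respect to the degree reverse lexicographic order induced by x_1 > x_2 > x_3 > x_4, the initial ideal of the defining ideal of the Backelin curve is generated by the monomials x_2x_3^3, x_1^{n−i}x_3^{3i−1} (1 ≤ i ≤ n), x_1^{r−n+3+j}x_2^{n−1−j} (0 ≤ j ≤ n−1), x_1^{r−2n+3+j}x_2^{2n−j} (0 ≤ j ≤ n−1), x_1^{r−n+2}x_2^{n}x_3, x_2^{n+1}x_3, x_2^{2n+1}; in particular x_4 divides no minimal generator of the initial ideal. -/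
open MvPolynomial

/-- The degree reverse lexicographic order on monomials in `m` variables, where
`v` lists the variables from greatest to least. -/
def DegRevLexLT {m : ℕ} (v : Fin m → Fin m) (a b : Fin m →₀ ℕ) : Prop :=
  (a.sum fun _ e => e) < (b.sum fun _ e => e) ∨
    ((a.sum fun _ e => e) = (b.sum fun _ e => e) ∧
      ∃ p : Fin m, b (v p) < a (v p) ∧ ∀ q : Fin m, p < q → a (v q) = b (v q))

/-- `μ` is the leading monomial of `f` with respect to `ord`. -/
def IsLeadMonomial {σ : Type*} {k : Type*} [CommSemiring k]
    (ord : (σ →₀ ℕ) → (σ →₀ ℕ) → Prop) (f : MvPolynomial σ k) (μ : σ →₀ ℕ) : Prop :=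
  μ ∈ f.support ∧ ∀ μ' ∈ f.support, μ' ≠ μ → ord μ' μ

/-- The initial ideal of `I` with respect to `ord`: the ideal generated by the
leading monomials of the nonzero elements of `I`. -/
noncomputable def InitialIdeal {σ : Type*} {k : Type*} [CommSemiring k]
    (ord : (σ →₀ ℕ) → (σ →₀ ℕ) → Prop) (I : Ideal (MvPolynomial σ k)) :
    Ideal (MvPolynomial σ k) :=
  Ideal.span {q | ∃ f ∈ I, f ≠ 0 ∧ ∃ μ, IsLeadMonomial ord f μ ∧ q = monomial μ (1 : k)}

/-!
`P` is the kernel of `xᵢ ↦ t ^ wᵢ` with `w = (s, s+3, s+3n+1, s+3n+2)`, so `f ∈ P` iff the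
coefficients of `f` cancel within each weight class. Every listed monomial `x^g` has a
degrevlex-smaller partner `x^g'` of the same weight, so `x^g - x^g' ∈ P` has leading monomial `x^g`.
Conversely, suppose two standard monomials (divisible by no `x^g`) never share a weight. The leading
monomial of `f ∈ P` shares its weight with a smaller monomial of `f`; the binomials push that one
down its finite weight class to a standard monomial of the same weight, so the leading monomial
cannot be standard.

The injectivity is arithmetic in `s·deg + 3b + (3n+1)c + (3n+2)d`: since `s` is large, two standard
exponents of equal weight have degrees differing by 0 or 1, and the remaining equation leaves only a
few residues for `c - c' - (d' - d)` modulo `3n+1`, each excluded by the divisibility constraints.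
-/

theorem degRevLexLT_iff {m : ℕ} {v : Fin m → Fin m} {a b : Fin m →₀ ℕ} :
    DegRevLexLT v a b ↔ a.degree < b.degree ∨
      (a.degree = b.degree ∧ ∃ p, b (v p) < a (v p) ∧ ∀ q, p < q → a (v q) = b (v q)) :=
  Iff.rfl

namespace DegRevLexLT

variable {m : ℕ} {v : Fin m → Fin m} {a b c : Fin m →₀ ℕ}

theorem irrefl (a : Fin m →₀ ℕ) : ¬ DegRevLexLT v a a := by
  rintro (h | ⟨-, p, h, -⟩) <;> exact lt_irrefl _ h

theorem trans (hab : DegRevLexLT v a b) (hbc : DegRevLexLT v b c) : DegRevLexLT v a c := by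
  rw [degRevLexLT_iff] at *
  rcases hab with hab | ⟨hab, p, hp, hpa⟩ <;> rcases hbc with hbc | ⟨hbc, q, hq, hqb⟩
  · exact .inl (hab.trans hbc)
  · exact .inl (hbc ▸ hab)
  · exact .inl (hab ▸ hbc)
  refine .inr ⟨hab.trans hbc, ?_⟩
  rcases lt_trichotomy p q with hpq | rfl | hqp
  · exact ⟨q, hpa q hpq ▸ hq, fun t ht => (hpa t (hpq.trans ht)).trans (hqb t ht)⟩
  · exact ⟨p, hq.trans hp, fun t ht => (hpa t ht).trans (hqb t ht)⟩
  · exact ⟨p, (hqb p hqp).symm ▸ hp, fun t ht => (hpa t ht).trans (hqb t (hqp.trans ht))⟩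

instance : IsStrictOrder (Fin m →₀ ℕ) (DegRevLexLT v) where
  irrefl := irrefl
  trans _ _ _ := trans

theorem add_right (e : Fin m →₀ ℕ) (h : DegRevLexLT v a b) : DegRevLexLT v (a + e) (b + e) := by
  rw [degRevLexLT_iff] at *
  simpa only [map_add, Finsupp.add_apply, add_lt_add_iff_right, add_left_inj] using h

theorem of_degree_lt (h : a.degree < b.degree) : DegRevLexLT v a b :=
  .inl h

theorem of_degree_eq_of_last_lt {a b : Fin (m + 1) →₀ ℕ} (h : a.degree = b.degree)
    (hlast : b (Fin.last m) < a (Fin.last m)) : DegRevLexLT id a b :=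
  .inr ⟨h, Fin.last m, hlast, fun q hq => absurd hq (Fin.le_last q).not_gt⟩

end DegRevLexLT

section Toric

variable {σ k : Type*} (w : σ → ℕ)

def IsStandardMonomial (G : Set (σ →₀ ℕ)) (μ : σ →₀ ℕ) : Prop :=
  ∀ g ∈ G, ¬ g ≤ μ

theorem finite_setOf_weight_eq [Finite σ] (hw : ∀ i, w i ≠ 0) (m : ℕ) :
    {ν : σ →₀ ℕ | Finsupp.weight w ν = m}.Finite := by
  classical
  have := Fintype.ofFinite σ
  refine (Set.finite_Iic (Finsupp.equivFunOnFinite.symm fun _ => m)).subset ?_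
  rintro ν rfl i
  exact Finsupp.le_weight w (hw i) ν

variable [CommRing k]

theorem aeval_X_pow_monomial (μ : σ →₀ ℕ) (c : k) :
    aeval (fun i => (Polynomial.X : Polynomial k) ^ w i) (monomial μ c) =
      Polynomial.C c * Polynomial.X ^ Finsupp.weight w μ := by
  rw [aeval_monomial, Polynomial.algebraMap_eq, Finsupp.weight_apply, Finsupp.prod, Finsupp.sum]
  simp only [← pow_mul, smul_eq_mul, mul_comm (w _), Finset.prod_pow_eq_pow_sum]

theorem exists_ne_weight_eq_of_aeval_eq_zero {f : MvPolynomial σ k}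
    (hf : aeval (fun i => (Polynomial.X : Polynomial k) ^ w i) f = 0) {μ : σ →₀ ℕ}
    (hμ : μ ∈ f.support) :
    ∃ ν ∈ f.support, ν ≠ μ ∧ Finsupp.weight w ν = Finsupp.weight w μ := by
  classical
  by_contra! h
  have hcoeff := congrArg (Polynomial.coeff · (Finsupp.weight w μ)) hf
  simp only [Polynomial.coeff_zero] at hcoeff
  rw [f.as_sum, map_sum, Polynomial.finsetSum_coeff, Finset.sum_eq_single μ] at hcoeff
  · simp [aeval_X_pow_monomial, mem_support_iff.mp hμ] at hcoeff
  · intro ν hν hne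
    rw [aeval_X_pow_monomial, Polynomial.coeff_C_mul_X_pow, if_neg (h ν hν hne).symm]
  · exact fun h' => absurd hμ h'

theorem isLeadMonomial_monomial_sub_monomial [Nontrivial k]
    {ord : (σ →₀ ℕ) → (σ →₀ ℕ) → Prop} [Std.Irrefl ord] {g g' : σ →₀ ℕ} (h : ord g' g) :
    IsLeadMonomial ord (monomial g (1 : k) - monomial g' 1) g := by
  classical
  have hne : g' ≠ g := fun e => irrefl_of ord g (e ▸ h)
  refine ⟨?_, fun μ hμ hμg => ?_⟩
  · rw [mem_support_iff, coeff_sub, coeff_monomial, coeff_monomial, if_pos rfl, if_neg hne]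
    simp
  · have := support_sub σ _ _ hμ
    simp only [Finset.mem_union, support_monomial, one_ne_zero, if_false,
      Finset.mem_singleton] at this
    exact this.resolve_left hμg ▸ h

variable {ord : (σ →₀ ℕ) → (σ →₀ ℕ) → Prop} [IsStrictOrder (σ →₀ ℕ) ord] [Finite σ]
  {G : Set (σ →₀ ℕ)}

theorem not_lt_of_isStandardMonomial (hw : ∀ i, w i ≠ 0)
    (hadd : ∀ a b e, ord a b → ord (a + e) (b + e))
    (hG : ∀ g ∈ G, ∃ g', Finsupp.weight w g' = Finsupp.weight w g ∧ ord g' g)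
    (hinj : ∀ μ ν, IsStandardMonomial G μ → IsStandardMonomial G ν →
      Finsupp.weight w μ = Finsupp.weight w ν → μ = ν)
    {μ ν : σ →₀ ℕ} (hμ : IsStandardMonomial G μ)
    (hν : Finsupp.weight w ν = Finsupp.weight w μ) : ¬ ord ν μ := by
  refine (finite_setOf_weight_eq w hw _).wellFoundedOn.induction (r := ord)
    (P := fun ν => ¬ ord ν μ) hν ?_
  intro ν hνw IH hνμ
  by_cases hstd : IsStandardMonomial G ν
  · exact irrefl_of ord μ (hinj ν μ hstd hμ hνw ▸ hνμ)
  obtain ⟨g, hg, hgν⟩ : ∃ g ∈ G, g ≤ ν := by simpa [IsStandardMonomial] using hstd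
  obtain ⟨g', hwg, hg'g⟩ := hG g hg
  have hsplit : g + (ν - g) = ν := add_tsub_cancel_of_le hgν
  have hlt : ord (g' + (ν - g)) ν := by simpa only [hsplit] using hadd _ _ (ν - g) hg'g
  refine IH (g' + (ν - g)) ?_ hlt (trans_of ord hlt hνμ)
  show Finsupp.weight w (g' + (ν - g)) = _
  rw [map_add, hwg, ← map_add, hsplit, hνw]

theorem initialIdeal_ker_aeval_X_pow [Nontrivial k] (hw : ∀ i, w i ≠ 0)
    (hadd : ∀ a b e, ord a b → ord (a + e) (b + e))
    (hG : ∀ g ∈ G, ∃ g', Finsupp.weight w g' = Finsupp.weight w g ∧ ord g' g)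
    (hinj : ∀ μ ν, IsStandardMonomial G μ → IsStandardMonomial G ν →
      Finsupp.weight w μ = Finsupp.weight w ν → μ = ν) :
    InitialIdeal ord
        (RingHom.ker (aeval fun i => (Polynomial.X : Polynomial k) ^ w i).toRingHom) =
      Ideal.span ((fun g => monomial g (1 : k)) '' G) := by
  apply le_antisymm
  · rw [InitialIdeal, Ideal.span_le]
    rintro _ ⟨f, hf, -, μ, ⟨hμ, hlead⟩, rfl⟩
    obtain ⟨ν, hν, hνμ, hνw⟩ := exists_ne_weight_eq_of_aeval_eq_zero w hf hμ
    have hnstd : ¬ IsStandardMonomial G μ := fun hstd =>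
      not_lt_of_isStandardMonomial w hw hadd hG hinj hstd hνw (hlead ν hν hνμ)
    obtain ⟨g, hg, hgμ⟩ : ∃ g ∈ G, g ≤ μ := by simpa [IsStandardMonomial] using hnstd
    have hsplit : monomial μ (1 : k) = monomial g 1 * monomial (μ - g) 1 := by
      rw [monomial_mul, one_mul, add_tsub_cancel_of_le hgμ]
    rw [hsplit]
    exact Ideal.mul_mem_right _ _ (Ideal.subset_span ⟨g, hg, rfl⟩)
  · rw [Ideal.span_le]
    rintro _ ⟨g, hg, rfl⟩
    obtain ⟨g', hwg, hg'g⟩ := hG g hg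
    have hlead := isLeadMonomial_monomial_sub_monomial (k := k) hg'g
    refine Ideal.subset_span ⟨_, ?_, fun h0 => by simpa [h0] using hlead.1, g, hlead, rfl⟩
    simp [RingHom.mem_ker, aeval_X_pow_monomial, hwg]

end Toric

namespace Backelin

noncomputable def expVec (a b c d : ℕ) : Fin 4 →₀ ℕ := Finsupp.equivFunOnFinite.symm ![a, b, c, d]

@[simp] theorem expVec_apply (a b c d : ℕ) (i : Fin 4) : expVec a b c d i = ![a, b, c, d] i := rfl

theorem expVec_le_iff {a b c d : ℕ} {μ : Fin 4 →₀ ℕ} :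
    expVec a b c d ≤ μ ↔ a ≤ μ 0 ∧ b ≤ μ 1 ∧ c ≤ μ 2 ∧ d ≤ μ 3 := by
  simp [Finsupp.le_def, Fin.forall_fin_succ]

theorem degree_expVec (a b c d : ℕ) : (expVec a b c d).degree = a + b + c + d := by
  simp [Finsupp.degree_eq_sum, Fin.sum_univ_four, add_assoc]

theorem weight_fin_four (w : Fin 4 → ℕ) (μ : Fin 4 →₀ ℕ) :
    Finsupp.weight w μ = μ 0 * w 0 + μ 1 * w 1 + μ 2 * w 2 + μ 3 * w 3 := by
  rw [Finsupp.weight_apply, Finsupp.sum_fintype _ _ (by simp), Fin.sum_univ_four]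
  rfl

theorem monomial_expVec {k : Type*} [CommSemiring k] (a b c d : ℕ) :
    monomial (expVec a b c d) (1 : k) = X 0 ^ a * X 1 ^ b * X 2 ^ c * X 3 ^ d := by
  have : expVec a b c d = .single 0 a + .single 1 b + .single 2 c + .single 3 d := by
    ext i; fin_cases i <;> simp
  simp only [this, X_pow_eq_monomial, monomial_mul, mul_one]

def weights (n r : ℕ) : Fin 4 → ℕ :=
  letI s := r * (3 * n + 2) + 3
  ![s, s + 3, s + 3 * n + 1, s + 3 * n + 2]

theorem X_pow_weights (k : Type*) [CommSemiring k] (n r : ℕ) :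
    letI s := r * (3 * n + 2) + 3
    (fun i => (Polynomial.X : Polynomial k) ^ weights n r i) =
      ![Polynomial.X ^ s, Polynomial.X ^ (s + 3), Polynomial.X ^ (s + 3 * n + 1),
        Polynomial.X ^ (s + 3 * n + 2)] := by
  funext i; fin_cases i <;> rfl

theorem weight_weights (n r : ℕ) (μ : Fin 4 →₀ ℕ) :
    Finsupp.weight (weights n r) μ = (r * (3 * n + 2) + 3) * (μ 0 + μ 1 + μ 2 + μ 3) +
      3 * μ 1 + (3 * n + 1) * μ 2 + (3 * n + 2) * μ 3 := by
  simp [weight_fin_four, weights]; ring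

theorem weight_expVec (n r a b c d : ℕ) :
    Finsupp.weight (weights n r) (expVec a b c d) =
      (r * (3 * n + 2) + 3) * (a + b + c + d) + 3 * b + (3 * n + 1) * c + (3 * n + 2) * d := by
  simp [weight_weights]

def leadExps (n r : ℕ) : Set (Fin 4 →₀ ℕ) :=
  {g | g = expVec 0 1 3 0 ∨
    (∃ i, 1 ≤ i ∧ i ≤ n ∧ g = expVec (n - i) 0 (3 * i - 1) 0) ∨
    (∃ j, j ≤ n - 1 ∧ g = expVec (r - n + 3 + j) (n - 1 - j) 0 0) ∨
    (∃ j, j ≤ n - 1 ∧ g = expVec (r - 2 * n + 3 + j) (2 * n - j) 0 0) ∨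
    g = expVec (r - n + 2) n 1 0 ∨
    g = expVec 0 (n + 1) 1 0 ∨
    g = expVec 0 (2 * n + 1) 0 0}

theorem exists_binomial {n r : ℕ} (hn : 2 ≤ n) (hr : 3 * n + 2 ≤ r) :
    ∀ g ∈ leadExps n r, ∃ g', Finsupp.weight (weights n r) g' = Finsupp.weight (weights n r) g ∧
      DegRevLexLT id g' g := by
  rintro g (rfl | ⟨i, hi1, hin, rfl⟩ | ⟨j, hj, rfl⟩ | ⟨j, hj, rfl⟩ | rfl | rfl | rfl)
  · refine ⟨expVec 1 0 0 3, ?_, .of_degree_eq_of_last_lt ?_ ?_⟩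
    · rw [weight_expVec, weight_expVec]; ring
    · simp [degree_expVec]
    · simp
  · refine ⟨expVec 0 (n - i + 1) 0 (3 * i - 2), ?_, .of_degree_eq_of_last_lt ?_ ?_⟩
    · rw [weight_expVec, weight_expVec]
      zify [hin, (by omega : 1 ≤ 3 * i), (by omega : 2 ≤ 3 * i)]
      ring
    · rw [degree_expVec, degree_expVec]; omega
    · simp; omega
  · refine ⟨expVec 0 0 (3 * j + 2) (r - 3 * j - 1), ?_, .of_degree_lt ?_⟩
    · rw [weight_expVec, weight_expVec]
      zify [(by omega : n ≤ r), (by omega : 1 ≤ n), hj, (by omega : 3 * j ≤ r),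
        (by omega : 1 ≤ r - 3 * j)]
      ring
    · rw [degree_expVec, degree_expVec]; omega
  · refine ⟨expVec 0 0 (3 * j + 1) (r + 1 - 3 * j), ?_, .of_degree_lt ?_⟩
    · rw [weight_expVec, weight_expVec]
      zify [(by omega : 2 * n ≤ r), (by omega : j ≤ 2 * n), (by omega : 3 * j ≤ r + 1)]
      ring
    · rw [degree_expVec, degree_expVec]; omega
  · refine ⟨expVec 0 0 0 (r + 2), ?_, .of_degree_lt ?_⟩
    · rw [weight_expVec, weight_expVec]
      zify [(by omega : n ≤ r)]
      ring
    · rw [degree_expVec, degree_expVec]; omega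
  · refine ⟨expVec n 0 0 2, ?_, .of_degree_eq_of_last_lt ?_ ?_⟩
    · rw [weight_expVec, weight_expVec]; ring
    · rw [degree_expVec, degree_expVec]; omega
    · simp
  · refine ⟨expVec (2 * n - 1) 0 1 1, ?_, .of_degree_eq_of_last_lt ?_ ?_⟩
    · rw [weight_expVec, weight_expVec]
      zify [(by omega : 1 ≤ 2 * n)]
      ring
    · rw [degree_expVec, degree_expVec]; omega
    · simp

theorem degree_sub_eq_zero_or_one {N R a b c a' b' c' D : ℤ} (hN : 2 ≤ N) (hR : 3 * N + 2 ≤ R)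
    (hb : 0 ≤ b) (hbN : b ≤ 2 * N) (hc : 0 ≤ c) (hcN : c ≤ 3 * N - 2) (habc : a + b + c ≤ R + 4)
    (ha' : 0 ≤ a') (hb' : 0 ≤ b') (hc' : 0 ≤ c') (hD : 0 ≤ D)
    (h : (R * (3 * N + 2) + 3) * (a + b + c - (a' + b' + c') - D) =
      (3 * N + 2) * D + (3 * b' + (3 * N + 1) * c') - (3 * b + (3 * N + 1) * c)) :
    a + b + c - (a' + b' + c') - D = 0 ∨ a + b + c - (a' + b' + c') - D = 1 := by
  have hS : (3 * N + 2) * (3 * N + 2) + 3 ≤ R * (3 * N + 2) + 3 := by nlinarith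
  have hT : 3 * b + (3 * N + 1) * c ≤ 9 * N ^ 2 + 3 * N - 2 := by nlinarith
  have hT' : 3 * b' + (3 * N + 1) * c' ≤ (3 * N + 1) * (a' + b' + c') := by nlinarith
  have hT'0 : 0 ≤ 3 * b' + (3 * N + 1) * c' := by positivity
  generalize hK : a + b + c - (a' + b' + c') - D = K at h
  generalize hSdef : R * (3 * N + 2) + 3 = S at h hS
  have hK0 : 0 ≤ K := by
    by_contra! hneg
    nlinarith
  have hK1 : K ≤ 1 := by
    by_contra! hbig
    have h1 : 2 * S ≤ S * K := by nlinarith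
    have h2 : (3 * N + 2) * (a + b + c) ≤ (3 * N + 2) * (R + 4) := by gcongr
    have h3 : 0 ≤ (3 * N + 2) * (K - 2) := by nlinarith
    rw [← hK] at h h3
    nlinarith
  omega

theorem residue_bounds_of_degree_eq {N D β γ : ℤ} (hN : 2 ≤ N) (hD : 0 ≤ D)
    (hβ : |β| ≤ 2 * N) (hγ : |γ| ≤ 3 * N - 2) (h : (3 * N + 1) * (γ - D) = D - 3 * β) :
    -1 ≤ γ - D ∧ γ - D ≤ 2 := by
  rw [abs_le] at hβ hγ
  have hD' : D ≤ 3 * N - 1 := by nlinarith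
  constructor <;> nlinarith

theorem residue_bounds_of_degree_succ {N ε β γ : ℤ} (hN : 2 ≤ N) (hε : ε ≤ 3)
    (hβ : |β| ≤ 2 * N) (hγ : |γ| ≤ 3 * N - 2) (h : (3 * N + 1) * (γ - ε) = ε - 3 - 3 * β) :
    -3 ≤ γ - ε ∧ γ - ε ≤ 1 := by
  rw [abs_le] at hβ hγ
  have hε' : -(3 * N) ≤ ε := by nlinarith
  constructor <;> nlinarith

/-- Linear consequences, for the exponents `(a, b, c)` of `x₁, x₂, x₃`, of a monomial being standard
with respect to `leadExps n r`. -/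
structure StdBounds (n r a b c : ℕ) : Prop where
  c_le_two : 1 ≤ b → c ≤ 2
  c_le_one : n - 1 ≤ a → c ≤ 1
  three_mul_add_le : a < n → 3 * a + c ≤ 3 * n - 2
  add_le_of_lt : b < n → a + b ≤ r + 1
  add_le_of_gt : n < b → a + b ≤ r + 2
  not_le : ¬(r - n + 2 ≤ a ∧ n ≤ b ∧ 1 ≤ c)
  c_eq_zero : n < b → c = 0
  b_le : b ≤ 2 * n
  c_le : c ≤ 3 * n - 2
  a_le : a ≤ r + 1
  a_add_b_le : a + b ≤ r + 2
  a_add_b_add_c_le : a + b + c ≤ r + 4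

/-- With `k` the degree difference, `s·k` is the small quantity `(3n+2)(d'-d) + …`, so `k ∈ {0, 1}`;
then `(3n+1)·e = (d'-d) - 3(b-b')` (or its shift by `r`) confines `e` to a few values, each of which
the bounds decide. -/
theorem StdBounds.eq_of_weight_eq {n r a b c d a' b' c' d' : ℕ} (hn : 2 ≤ n)
    (hr : 3 * n + 2 ≤ r) (H : StdBounds n r a b c) (H' : StdBounds n r a' b' c') (hd : d ≤ d')
    (hw : (r * (3 * n + 2) + 3) * (a + b + c + d) + 3 * b + (3 * n + 1) * c + (3 * n + 2) * d =
      (r * (3 * n + 2) + 3) * (a' + b' + c' + d') + 3 * b' + (3 * n + 1) * c' + (3 * n + 2) * d') :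
    a = a' ∧ b = b' ∧ c = c' ∧ d = d' := by
  have hwZ : ((r : ℤ) * (3 * n + 2) + 3) * ((a + b + c : ℤ) - (a' + b' + c') - (d' - d)) =
      (3 * n + 2) * ((d' : ℤ) - d) + (3 * b' + (3 * n + 1) * c') - (3 * b + (3 * n + 1) * c) := by
    have hcast := congrArg (Nat.cast : ℕ → ℤ) hw
    push_cast at hcast
    linear_combination hcast
  have hβ : |(b : ℤ) - b'| ≤ 2 * n := by
    have := H.b_le; have := H'.b_le; exact abs_le.mpr ⟨by omega, by omega⟩
  have hγ : |(c : ℤ) - c'| ≤ 3 * n - 2 := by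
    have := H.c_le; have := H'.c_le; exact abs_le.mpr ⟨by omega, by omega⟩
  have hK := degree_sub_eq_zero_or_one (N := n) (R := r) (by omega) (by omega) (by positivity)
    (by have := H.b_le; omega) (by positivity) (by have := H.c_le; omega)
    (by have := H.a_add_b_add_c_le; omega) (by positivity) (by positivity) (by positivity)
    (by omega) hwZ
  have := H'.c_eq_zero
  have := H'.c_le
  clear H'
  cases H
  rcases hK with hK | hK
  · have h0 : (3 * n + 1 : ℤ) * ((c - c') - (d' - d)) = (d' - d) - 3 * (b - b') := by
      linear_combination hwZ - ((r : ℤ) * (3 * n + 2) + 3) * hK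
    obtain ⟨hlo, hhi⟩ := residue_bounds_of_degree_eq (by omega) (by omega) hβ hγ h0
    generalize he : (c : ℤ) - c' - (d' - d) = e at h0 hlo hhi
    clear hw hwZ hβ hγ
    interval_cases e <;> omega
  · have h1 : (3 * n + 1 : ℤ) * ((c - c') - (d' - d - r)) = (d' - d - r) - 3 - 3 * (b - b') := by
      linear_combination hwZ - ((r : ℤ) * (3 * n + 2) + 3) * hK
    obtain ⟨hlo, hhi⟩ := residue_bounds_of_degree_succ (by omega) (by omega) hβ hγ h1
    generalize he : (c : ℤ) - c' - (d' - d - r) = e at h1 hlo hhi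
    clear hw hwZ hβ hγ
    interval_cases e <;> omega

theorem stdBounds_of_isStandardMonomial {n r : ℕ} (hn : 2 ≤ n) (hr : 3 * n + 2 ≤ r)
    {μ : Fin 4 →₀ ℕ} (hμ : IsStandardMonomial (leadExps n r) μ) :
    StdBounds n r (μ 0) (μ 1) (μ 2) := by
  have free : ∀ {a b c d}, expVec a b c d ∈ leadExps n r →
      ¬ (a ≤ μ 0 ∧ b ≤ μ 1 ∧ c ≤ μ 2 ∧ d ≤ μ 3) := fun hg hle => hμ _ hg (expVec_le_iff.mpr hle)
  have g1 := free (.inl rfl)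
  have g2 : ∀ i, 1 ≤ i → i ≤ n → _ := fun i h1 h2 => free (.inr (.inl ⟨i, h1, h2, rfl⟩))
  have g3 : ∀ j, j ≤ n - 1 → _ := fun j h => free (.inr (.inr (.inl ⟨j, h, rfl⟩)))
  have g4 : ∀ j, j ≤ n - 1 → _ := fun j h => free (.inr (.inr (.inr (.inl ⟨j, h, rfl⟩))))
  have g5 := free (.inr (.inr (.inr (.inr (.inl rfl)))))
  have g6 := free (.inr (.inr (.inr (.inr (.inr (.inl rfl))))))
  have g7 := free (.inr (.inr (.inr (.inr (.inr (.inr rfl))))))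
  have hc : μ 2 ≤ 3 * n - 2 := by have := g2 n (by omega) le_rfl; omega
  have hab₁ : μ 1 < n → μ 0 + μ 1 ≤ r + 1 := fun hb => by
    have := g3 (n - 1 - μ 1) (by omega); omega
  have hab₂ : n < μ 1 → μ 0 + μ 1 ≤ r + 2 := fun hb => by
    have := g4 (2 * n - μ 1) (by omega); omega
  have ha : n - 1 ≤ μ 1 → μ 0 ≤ r - n + 2 := fun hb => by have := g3 0 (by omega); omega
  have hac : μ 0 < n → 3 * μ 0 + μ 2 ≤ 3 * n - 2 := fun ha => by
    have := g2 (n - μ 0) (by omega) (by omega); omega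
  have hc₁ : n - 1 ≤ μ 0 → μ 2 ≤ 1 := fun ha => by have := g2 1 le_rfl (by omega); omega
  have hc₂ : 1 ≤ μ 1 → μ 2 ≤ 2 := fun hb => by omega
  refine ⟨hc₂, hc₁, hac, hab₁, hab₂, fun h => g5 (by omega), fun hb => by omega, by omega, hc,
    by omega, by omega, by omega⟩

theorem eq_of_isStandardMonomial_of_weight_eq {n r : ℕ} (hn : 2 ≤ n) (hr : 3 * n + 2 ≤ r)
    {μ ν : Fin 4 →₀ ℕ} (hμ : IsStandardMonomial (leadExps n r) μ)
    (hν : IsStandardMonomial (leadExps n r) ν)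
    (h : Finsupp.weight (weights n r) μ = Finsupp.weight (weights n r) ν) : μ = ν := by
  wlog hd : μ 3 ≤ ν 3 generalizing μ ν
  · exact (this hν hμ h.symm (le_of_not_ge hd)).symm
  rw [weight_weights, weight_weights] at h
  obtain ⟨h0, h1, h2, h3⟩ := (stdBounds_of_isStandardMonomial hn hr hμ).eq_of_weight_eq hn hr
    (stdBounds_of_isStandardMonomial hn hr hν) hd h
  ext i
  fin_cases i <;> assumption

theorem apply_three_eq_zero_of_mem_leadExps {n r : ℕ} {g : Fin 4 →₀ ℕ}
    (hg : g ∈ leadExps n r) : g 3 = 0 := by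
  rcases hg with rfl | ⟨_, _, _, rfl⟩ | ⟨_, _, rfl⟩ | ⟨_, _, rfl⟩ | rfl | rfl | rfl <;> rfl

theorem monomial_image_leadExps (k : Type*) [CommSemiring k] (n r : ℕ) :
    (fun g => monomial g (1 : k)) '' leadExps n r =
      {q | q = X 1 * X 2 ^ 3 ∨
        (∃ i, 1 ≤ i ∧ i ≤ n ∧ q = X 0 ^ (n - i) * X 2 ^ (3 * i - 1)) ∨
        (∃ j, j ≤ n - 1 ∧ q = X 0 ^ (r - n + 3 + j) * X 1 ^ (n - 1 - j)) ∨
        (∃ j, j ≤ n - 1 ∧ q = X 0 ^ (r - 2 * n + 3 + j) * X 1 ^ (2 * n - j)) ∨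
        q = X 0 ^ (r - n + 2) * X 1 ^ n * X 2 ∨
        q = X 1 ^ (n + 1) * X 2 ∨
        q = X 1 ^ (2 * n + 1)} := by
  ext q
  constructor
  · rintro ⟨g, rfl | ⟨i, hi, hin, rfl⟩ | ⟨j, hj, rfl⟩ | ⟨j, hj, rfl⟩ | rfl | rfl | rfl, rfl⟩
    · exact .inl (by simp [monomial_expVec])
    · exact .inr (.inl ⟨i, hi, hin, by simp [monomial_expVec]⟩)
    · exact .inr (.inr (.inl ⟨j, hj, by simp [monomial_expVec]⟩))
    · exact .inr (.inr (.inr (.inl ⟨j, hj, by simp [monomial_expVec]⟩)))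
    · exact .inr (.inr (.inr (.inr (.inl (by simp [monomial_expVec])))))
    · exact .inr (.inr (.inr (.inr (.inr (.inl (by simp [monomial_expVec]))))))
    · exact .inr (.inr (.inr (.inr (.inr (.inr (by simp [monomial_expVec]))))))
  · rintro (rfl | ⟨i, hi, hin, rfl⟩ | ⟨j, hj, rfl⟩ | ⟨j, hj, rfl⟩ | rfl | rfl | rfl)
    · exact ⟨_, .inl rfl, by simp [monomial_expVec]⟩
    · exact ⟨_, .inr (.inl ⟨i, hi, hin, rfl⟩), by simp [monomial_expVec]⟩
    · exact ⟨_, .inr (.inr (.inl ⟨j, hj, rfl⟩)), by simp [monomial_expVec]⟩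
    · exact ⟨_, .inr (.inr (.inr (.inl ⟨j, hj, rfl⟩))), by simp [monomial_expVec]⟩
    · exact ⟨_, .inr (.inr (.inr (.inr (.inl rfl)))), by simp [monomial_expVec]⟩
    · exact ⟨_, .inr (.inr (.inr (.inr (.inr (.inl rfl))))), by simp [monomial_expVec]⟩
    · exact ⟨_, .inr (.inr (.inr (.inr (.inr (.inr rfl))))), by simp [monomial_expVec]⟩

end Backelin

/-- With respect to degrevlex with `x₁ > x₂ > x₃ > x₄`, the initial ideal of
the toric ideal of the Backelin curve is generated by the listed monomials, and
`x₄` divides none of them. -/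
theorem backelin_initial_ideal
    (k : Type*) [Field k] (n r : ℕ) (hn : 2 ≤ n) (hr : 3 * n + 2 ≤ r) :
    letI s : ℕ := r * (3 * n + 2) + 3
    letI P : Ideal (MvPolynomial (Fin 4) k) :=
      RingHom.ker (aeval (R := k)
        ![(Polynomial.X : Polynomial k) ^ s, Polynomial.X ^ (s + 3),
          Polynomial.X ^ (s + 3 * n + 1), Polynomial.X ^ (s + 3 * n + 2)]).toRingHom
    letI x₁ : MvPolynomial (Fin 4) k := X 0
    letI x₂ : MvPolynomial (Fin 4) k := X 1
    letI x₃ : MvPolynomial (Fin 4) k := X 2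
    letI x₄ : MvPolynomial (Fin 4) k := X 3
    letI M : Set (MvPolynomial (Fin 4) k) :=
      {q | q = x₂ * x₃ ^ 3 ∨
        (∃ i, 1 ≤ i ∧ i ≤ n ∧ q = x₁ ^ (n - i) * x₃ ^ (3 * i - 1)) ∨
        (∃ j, j ≤ n - 1 ∧ q = x₁ ^ (r - n + 3 + j) * x₂ ^ (n - 1 - j)) ∨
        (∃ j, j ≤ n - 1 ∧ q = x₁ ^ (r - 2 * n + 3 + j) * x₂ ^ (2 * n - j)) ∨
        q = x₁ ^ (r - n + 2) * x₂ ^ n * x₃ ∨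
        q = x₂ ^ (n + 1) * x₃ ∨
        q = x₂ ^ (2 * n + 1)}
    InitialIdeal (DegRevLexLT (id : Fin 4 → Fin 4)) P = Ideal.span M ∧
      ∀ q ∈ M, ¬ x₄ ∣ q := by
  rw [← Backelin.X_pow_weights, ← Backelin.monomial_image_leadExps k n r]
  refine ⟨initialIdeal_ker_aeval_X_pow _ ?_ (fun _ _ e => DegRevLexLT.add_right e)
    (Backelin.exists_binomial hn hr)
    (fun _ _ => Backelin.eq_of_isStandardMonomial_of_weight_eq hn hr), ?_⟩
  · intro i; fin_cases i <;> simp [Backelin.weights]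
  · rintro _ ⟨g, hg, rfl⟩
    simp [X_dvd_monomial, Backelin.apply_three_eq_zero_of_mem_leadExps hg]
end

section
/- Let I ⊂ k[x_0,...,x_r] be a graded ideal and < a monomial order. Then k[x_0,...,x_r]/I and k[x_0,...,x_r]/in_<(I) have the same Hilbert function. -/
open MvPolynomial

/-- The degree-`i` piece of `k[x]/I`, as a quotient of the space of homogeneous
polynomials of degree `i`. -/
noncomputable def gradedPieceDim (k : Type*) [Field k] {m : ℕ}
    (I : Ideal (MvPolynomial (Fin m) k)) (i : ℕ) : ℕ :=
  Module.finrank k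
    ((homogeneousSubmodule (Fin m) k i) ⧸
      (Submodule.comap (homogeneousSubmodule (Fin m) k i).subtype
        (Submodule.restrictScalars k I)))

/-! For a space `W` of polynomials with finitely many leading monomials, `dim W` is the number
of leading monomials of its elements: polynomials with distinct leading monomials are linearly
independent by triangularity, and an element of `W` is determined by its coefficients at these
monomials, since a nonzero one has a nonzero coefficient at its own leading monomial.

For a graded ideal `I`, the leading monomials of `I_i` are those of `I` of degree `i` (pass to a
homogeneous component). Since the order is compatible with addition, multiplying by a monomial
shifts leading monomials, so the leading monomials of `I` form an upward closed set; it follows that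
`in(I)`, which is graded, has the same leading monomials as `I`. Hence `dim I_i = dim in(I)_i`. -/

theorem Finset.exists_rel_greatest {α : Type*} {r : α → α → Prop} [IsStrictTotalOrder α r]
    {s : Finset α} (hs : s.Nonempty) : ∃ a ∈ s, ∀ b ∈ s, b ≠ a → r b a := by
  obtain ⟨⟨a, ha⟩, -, hmax⟩ := (s.finite_toSet.wellFoundedOn (r := Function.swap r)).has_min
    Set.univ ⟨⟨_, hs.choose_spec⟩, trivial⟩
  refine ⟨a, ha, fun b hb hne => ?_⟩
  have hab : ¬ r a b := hmax ⟨b, hb⟩ trivial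
  rcases trichotomous_of r b a with h | h | h
  exacts [h, absurd h hne, absurd h hab]

theorem MvPolynomial.support_homogeneousComponent_subset {σ R : Type*} [CommSemiring R]
    {n : ℕ} {φ : MvPolynomial σ R} : (homogeneousComponent n φ).support ⊆ φ.support := by
  intro ν hν
  rw [mem_support_iff, coeff_homogeneousComponent] at hν
  rw [mem_support_iff]
  split_ifs at hν
  exacts [hν, absurd rfl hν]

namespace IsLeadMonomial

variable {σ k : Type*} [CommSemiring k] {ord : (σ →₀ ℕ) → (σ →₀ ℕ) → Prop}
  {f : MvPolynomial σ k} {μ : σ →₀ ℕ}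

theorem coeff_ne_zero (h : IsLeadMonomial ord f μ) : coeff μ f ≠ 0 :=
  mem_support_iff.1 h.1

theorem ne_zero (h : IsLeadMonomial ord f μ) : f ≠ 0 := by
  rintro rfl
  exact h.coeff_ne_zero (coeff_zero μ)

theorem homogeneousComponent (h : IsLeadMonomial ord f μ) :
    IsLeadMonomial ord (MvPolynomial.homogeneousComponent μ.degree f) μ := by
  refine ⟨?_, fun ν hν hne => h.2 ν (support_homogeneousComponent_subset hν) hne⟩
  rw [mem_support_iff, coeff_homogeneousComponent, if_pos rfl]
  exact h.coeff_ne_zero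

theorem monomial_one_mul (hadd : ∀ a b c, ord a b → ord (a + c) (b + c))
    (h : IsLeadMonomial ord f μ) (β : σ →₀ ℕ) :
    IsLeadMonomial ord (monomial β 1 * f) (μ + β) := by
  classical
  refine ⟨?_, fun ν hν hne => ?_⟩
  · rw [mem_support_iff, add_comm, coeff_monomial_mul, one_mul]
    exact h.coeff_ne_zero
  · rw [mem_support_iff, coeff_monomial_mul'] at hν
    split_ifs at hν with hβν
    · rw [one_mul] at hν
      have hne' : ν - β ≠ μ := fun heq => hne (by rw [← heq, tsub_add_cancel_of_le hβν])
      simpa only [tsub_add_cancel_of_le hβν] using hadd _ _ β (h.2 _ (mem_support_iff.2 hν) hne')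
    · exact absurd rfl hν

theorem exists_of_ne_zero [IsStrictTotalOrder (σ →₀ ℕ) ord] (hf : f ≠ 0) :
    ∃ μ, IsLeadMonomial ord f μ :=
  let ⟨μ, hμ, hmax⟩ := Finset.exists_rel_greatest (r := ord) (support_nonempty.2 hf)
  ⟨μ, hμ, hmax⟩

end IsLeadMonomial

theorem isLeadMonomial_monomial {σ k : Type*} [CommSemiring k]
    {ord : (σ →₀ ℕ) → (σ →₀ ℕ) → Prop} {μ : σ →₀ ℕ} {c : k} (hc : c ≠ 0) :
    IsLeadMonomial ord (monomial μ c) μ := by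
  classical
  refine ⟨?_, fun ν hν hne => absurd (Finset.mem_singleton.1 (support_monomial_subset hν)) hne⟩
  rwa [mem_support_iff, coeff_monomial, if_pos rfl]

def leadMonomials {σ k : Type*} [CommSemiring k] (ord : (σ →₀ ℕ) → (σ →₀ ℕ) → Prop)
    (s : Set (MvPolynomial σ k)) : Set (σ →₀ ℕ) :=
  {μ | ∃ f ∈ s, IsLeadMonomial ord f μ}

section LinearAlgebra

variable {σ k : Type*} [Field k] {ord : (σ →₀ ℕ) → (σ →₀ ℕ) → Prop}
  [IsStrictTotalOrder (σ →₀ ℕ) ord]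

theorem linearIndependent_of_isLeadMonomial {ι : Type*} {v : ι → MvPolynomial σ k}
    {lm : ι → σ →₀ ℕ} (hlm : Function.Injective lm) (hv : ∀ i, IsLeadMonomial ord (v i) (lm i)) :
    LinearIndependent k v := by
  classical
  rw [linearIndependent_iff']
  intro s g hsum i hi
  by_contra hgi
  set s' := s.filter (g · ≠ 0)
  obtain ⟨μ, hμ, hmax⟩ := Finset.exists_rel_greatest (r := ord)
    (⟨lm i, Finset.mem_image_of_mem lm (Finset.mem_filter.2 ⟨hi, hgi⟩)⟩ : (s'.image lm).Nonempty)
  obtain ⟨j, hj, rfl⟩ := Finset.mem_image.1 hμ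
  obtain ⟨hjs, hgj⟩ := Finset.mem_filter.1 hj
  have hothers : ∀ b ∈ s, b ≠ j → g b * coeff (lm j) (v b) = 0 := by
    intro b hb hbj
    by_cases hgb : g b = 0
    · rw [hgb, zero_mul]
    have hlt : ord (lm b) (lm j) :=
      hmax _ (Finset.mem_image_of_mem lm (Finset.mem_filter.2 ⟨hb, hgb⟩)) (hlm.ne hbj)
    have hnot : lm j ∉ (v b).support := fun hmem =>
      asymm hlt ((hv b).2 _ hmem (hlm.ne hbj).symm)
    rw [notMem_support_iff.1 hnot, mul_zero]
  have hcoeff : coeff (lm j) (∑ b ∈ s, g b • v b) = g j * coeff (lm j) (v j) := by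
    simp only [coeff_sum, coeff_smul, smul_eq_mul]
    exact Finset.sum_eq_single j hothers (absurd hjs)
  rw [hsum, coeff_zero] at hcoeff
  exact mul_ne_zero hgj (hv j).coeff_ne_zero hcoeff.symm

theorem finrank_eq_ncard_leadMonomials (W : Submodule k (MvPolynomial σ k))
    (hW : (leadMonomials ord (W : Set (MvPolynomial σ k))).Finite) :
    Module.finrank k W = (leadMonomials ord (W : Set (MvPolynomial σ k))).ncard := by
  set L := leadMonomials ord (W : Set (MvPolynomial σ k))
  have : Fintype L := hW.fintype
  let coeffs : W →ₗ[k] L → k := (LinearMap.pi fun μ : L => lcoeff k μ.1) ∘ₗ W.subtype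
  have hcoeffs : Function.Injective coeffs := by
    rw [← LinearMap.ker_eq_bot, Submodule.eq_bot_iff]
    intro f hf
    by_contra hf0
    obtain ⟨μ, hμ⟩ := IsLeadMonomial.exists_of_ne_zero (ord := ord)
      (Subtype.coe_ne_coe.2 hf0 : (f : MvPolynomial σ k) ≠ 0)
    exact hμ.coeff_ne_zero (congrFun hf ⟨μ, f, f.2, hμ⟩)
  have : Module.Finite k W := Module.Finite.of_injective coeffs hcoeffs
  rw [← Nat.card_coe_set_eq, Nat.card_eq_fintype_card]
  refine le_antisymm ?_ ?_
  · simpa only [Module.finrank_fintype_fun_eq_card] using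
      LinearMap.finrank_le_finrank_of_injective hcoeffs
  · choose v hvW hv using fun μ : L => μ.2
    have hli : LinearIndependent k (fun μ : L => (⟨v μ, hvW μ⟩ : W)) :=
      .of_comp W.subtype (linearIndependent_of_isLeadMonomial Subtype.val_injective hv)
    exact hli.fintype_card_le_finrank

end LinearAlgebra

section Ideals

variable {σ k : Type*} [CommSemiring k] {ord : (σ →₀ ℕ) → (σ →₀ ℕ) → Prop}
  {I : Ideal (MvPolynomial σ k)}

theorem initialIdeal_eq_span :
    InitialIdeal ord I =
      Ideal.span
        ((fun μ => monomial μ (1 : k)) '' leadMonomials ord (I : Set (MvPolynomial σ k))) := by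
  unfold InitialIdeal
  congr 1
  ext q
  constructor
  · rintro ⟨f, hf, -, μ, hfμ, rfl⟩
    exact ⟨μ, ⟨f, hf, hfμ⟩, rfl⟩
  · rintro ⟨μ, ⟨f, hf, hfμ⟩, rfl⟩
    exact ⟨f, hf, hfμ.ne_zero, μ, hfμ, rfl⟩

theorem homogeneousComponent_mem_span_monomial {S : Set (σ →₀ ℕ)} {f : MvPolynomial σ k}
    (hf : f ∈ Ideal.span ((fun μ => monomial μ (1 : k)) '' S)) (d : ℕ) :
    homogeneousComponent d f ∈ Ideal.span ((fun μ => monomial μ (1 : k)) '' S) := by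
  rw [mem_ideal_span_monomial_image] at hf ⊢
  exact fun ν hν => hf ν (support_homogeneousComponent_subset hν)

theorem homogeneousComponent_mem_initialIdeal :
    ∀ f ∈ InitialIdeal ord I, ∀ d : ℕ, homogeneousComponent d f ∈ InitialIdeal ord I := by
  rw [initialIdeal_eq_span]
  exact fun f hf => homogeneousComponent_mem_span_monomial hf

theorem add_mem_leadMonomials (hadd : ∀ a b c, ord a b → ord (a + c) (b + c))
    {μ : σ →₀ ℕ} (hμ : μ ∈ leadMonomials ord (I : Set (MvPolynomial σ k))) (β : σ →₀ ℕ) :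
    μ + β ∈ leadMonomials ord (I : Set (MvPolynomial σ k)) :=
  let ⟨_, hf, hfμ⟩ := hμ
  ⟨_, I.mul_mem_left _ hf, hfμ.monomial_one_mul hadd β⟩

theorem leadMonomials_initialIdeal (hadd : ∀ a b c, ord a b → ord (a + c) (b + c)) :
    leadMonomials ord (InitialIdeal ord I : Set (MvPolynomial σ k)) =
      leadMonomials ord (I : Set (MvPolynomial σ k)) := by
  ext μ
  constructor
  · rintro ⟨f, hf, hfμ⟩
    rw [SetLike.mem_coe, initialIdeal_eq_span, mem_ideal_span_monomial_image] at hf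
    obtain ⟨α, hα, hαμ⟩ := hf μ hfμ.1
    simpa only [add_tsub_cancel_of_le hαμ] using add_mem_leadMonomials hadd hα (μ - α)
  · rintro ⟨f, hf, hfμ⟩
    have : Nontrivial k := ⟨⟨_, _, hfμ.coeff_ne_zero⟩⟩
    exact ⟨monomial μ 1, Ideal.subset_span ⟨f, hf, hfμ.ne_zero, μ, hfμ, rfl⟩,
      isLeadMonomial_monomial one_ne_zero⟩

theorem leadMonomials_inf_homogeneousSubmodule
    (hgraded : ∀ f ∈ I, ∀ d : ℕ, homogeneousComponent d f ∈ I) (i : ℕ) :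
    leadMonomials ord ((I.restrictScalars k ⊓ homogeneousSubmodule σ k i :
      Submodule k (MvPolynomial σ k)) : Set (MvPolynomial σ k)) =
      leadMonomials ord (I : Set (MvPolynomial σ k)) ∩ {μ | μ.degree = i} := by
  ext μ
  constructor
  · rintro ⟨f, ⟨hfI, hfV⟩, hfμ⟩
    refine ⟨⟨f, hfI, hfμ⟩, ?_⟩
    change μ.degree = i
    rw [Finsupp.degree_eq_weight_one]
    exact hfV hfμ.coeff_ne_zero
  · rintro ⟨⟨f, hfI, hfμ⟩, rfl : μ.degree = i⟩
    exact ⟨_, ⟨hgraded f hfI _, homogeneousComponent_isHomogeneous _ _⟩,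
      hfμ.homogeneousComponent⟩

end Ideals

section HilbertFunction

variable {k : Type*} [Field k]

theorem finrank_inf_homogeneousSubmodule {σ : Type*} [Finite σ]
    {ord : (σ →₀ ℕ) → (σ →₀ ℕ) → Prop} [IsStrictTotalOrder (σ →₀ ℕ) ord]
    {I : Ideal (MvPolynomial σ k)} (hgraded : ∀ f ∈ I, ∀ d : ℕ, homogeneousComponent d f ∈ I)
    (i : ℕ) :
    Module.finrank k (I.restrictScalars k ⊓ homogeneousSubmodule σ k i :
      Submodule k (MvPolynomial σ k)) =
      (leadMonomials ord (I : Set (MvPolynomial σ k)) ∩ {μ | μ.degree = i}).ncard := by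
  rw [← leadMonomials_inf_homogeneousSubmodule hgraded]
  refine finrank_eq_ncard_leadMonomials _ ?_
  rw [leadMonomials_inf_homogeneousSubmodule hgraded]
  exact (Finsupp.finite_of_degree_eq i).inter_of_right _

theorem gradedPieceDim_add_finrank_inf {m : ℕ} (X : Ideal (MvPolynomial (Fin m) k)) (i : ℕ) :
    gradedPieceDim k X i +
      Module.finrank k (X.restrictScalars k ⊓ homogeneousSubmodule (Fin m) k i :
        Submodule k (MvPolynomial (Fin m) k)) =
      Module.finrank k (homogeneousSubmodule (Fin m) k i) := by
  set V := homogeneousSubmodule (Fin m) k i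
  have : Module.Finite k V := Module.Finite.iff_fg.2 (homogeneousSubmodule_fg _ _ i)
  have hcomap :
      (X.restrictScalars k).comap V.subtype = (X.restrictScalars k ⊓ V).comap V.subtype := by
    rw [Submodule.comap_inf, Submodule.comap_subtype_self, inf_top_eq]
  rw [gradedPieceDim,
    ← Submodule.finrank_quotient_add_finrank ((X.restrictScalars k).comap V.subtype), hcomap,
    (Submodule.comapSubtypeEquivOfLe inf_le_right).finrank_eq]

end HilbertFunction

theorem hilbertFunction_initialIdeal_general
    (k : Type*) [Field k] (r : ℕ)
    (ord : (Fin (r + 1) →₀ ℕ) → (Fin (r + 1) →₀ ℕ) → Prop)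
    (htrans : Transitive ord) (hirr : ∀ a, ¬ ord a a)
    (htotal : ∀ a b, a = b ∨ ord a b ∨ ord b a)
    (hadd : ∀ a b c, ord a b → ord (a + c) (b + c))
    (I : Ideal (MvPolynomial (Fin (r + 1)) k))
    (hgraded : ∀ f ∈ I, ∀ d : ℕ, homogeneousComponent d f ∈ I) :
    ∀ i : ℕ, gradedPieceDim k I i = gradedPieceDim k (InitialIdeal ord I) i := by
  have : IsStrictTotalOrder _ ord :=
    { trichotomous := fun a b hab hba => by have := htotal a b; tauto
      irrefl := hirr
      trans := fun _ _ _ => @htrans _ _ _ }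
  intro i
  have hI := gradedPieceDim_add_finrank_inf I i
  have hJ := gradedPieceDim_add_finrank_inf (InitialIdeal ord I) i
  rw [finrank_inf_homogeneousSubmodule (ord := ord) hgraded] at hI
  rw [finrank_inf_homogeneousSubmodule (ord := ord) homogeneousComponent_mem_initialIdeal,
    leadMonomials_initialIdeal hadd] at hJ
  omega

/-- If `I` is a graded ideal of `k[x₀,…,x_r]` and `ord` a monomial order, then
`k[x]/I` and `k[x]/in(I)` have the same Hilbert function. -/
theorem hilbertFunction_initialIdeal
    (k : Type*) [Field k] (r : ℕ)
    (ord : (Fin (r + 1) →₀ ℕ) → (Fin (r + 1) →₀ ℕ) → Prop)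
    (htrans : Transitive ord) (hirr : ∀ a, ¬ ord a a)
    (htotal : ∀ a b, a = b ∨ ord a b ∨ ord b a)
    (hadd : ∀ a b c, ord a b → ord (a + c) (b + c))
    (hzero : ∀ a, a ≠ 0 → ord 0 a)
    (I : Ideal (MvPolynomial (Fin (r + 1)) k))
    (hgraded : ∀ f ∈ I, ∀ d : ℕ, homogeneousComponent d f ∈ I) :
    ∀ i : ℕ, gradedPieceDim k I i = gradedPieceDim k (InitialIdeal ord I) i :=
  hilbertFunction_initialIdeal_general k r ord htrans hirr htotal hadd I hgraded
end

section
/- Let I = (x^{A_1},...,x^{A_r}) be a monomial ideal in k[x_1,...,x_n], and let p(I) denote the numerator of the Hilbert series of k[x_1,...,x_n]/I over the common denominator (1−t)^n. Then p(I) = p((x^{A_1})) − Σ_{i=2}^{r} t^{|A_i|} p((x^{A_1},...,x^{A_{i−1}}) : x^{A_i}), where |A| is the total degree of x^A. -/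
open MvPolynomial

/-- The Hilbert series of `k[x₁,…,x_n]/I` as a formal power series over `ℤ`. -/
noncomputable def hilbSeries (k : Type*) [Field k] {m : ℕ}
    (I : Ideal (MvPolynomial (Fin m) k)) : PowerSeries ℤ :=
  PowerSeries.mk fun i => (gradedPieceDim k I i : ℤ)

/-- The numerator `p(I)` of the Hilbert series of `k[x₁,…,x_n]/I` over the
common denominator `(1-t)^n`, i.e. `p(I) = (1-t)^n · HS(I)`. -/
noncomputable def hilbNum (k : Type*) [Field k] {m : ℕ}
    (I : Ideal (MvPolynomial (Fin m) k)) : PowerSeries ℤ :=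
  (1 - PowerSeries.X) ^ m * hilbSeries k I

/-!
For a monomial ideal `I`, the monomials of degree `d` outside `I` (the standard monomials) form
a basis of the degree-`d` piece of `k[x]/I`. Splitting them according to whether `x^a` divides
them, and noting that `x^c ↦ x^(c + a)` identifies the standard monomials of `I : x^a` of degree
`d - |a|` with the standard monomials of `I` divisible by `x^a`, gives
`HS(I) = HS(I + (x^a)) + t^|a| · HS(I : x^a)`. Adding the generators one at a time and
telescoping yields the recursion.
-/

namespace MvPolynomial

variable {σ R : Type*} [CommSemiring R]

variable (R) in
noncomputable def monomialIdeal (G : Set (σ →₀ ℕ)) : Ideal (MvPolynomial σ R) :=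
  Ideal.span ((fun a => monomial a 1) '' G)

theorem mem_support_mul_monomial_one_iff (p : MvPolynomial σ R) (a b : σ →₀ ℕ) :
    b ∈ (p * monomial a 1).support ↔ a ≤ b ∧ b - a ∈ p.support := by
  rw [mem_support_iff, coeff_mul_monomial']
  split_ifs with h <;> simp [h, mem_support_iff]

theorem monomialIdeal_colon_monomial (G : Set (σ →₀ ℕ)) (a : σ →₀ ℕ) :
    (monomialIdeal R G).colon (Ideal.span {monomial a (1 : R)}) =
      monomialIdeal R ((· - a) '' G) := by
  ext p
  simp only [monomialIdeal, Ideal.mem_colon_span_singleton, mem_ideal_span_monomial_image,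
    Set.exists_mem_image, mem_support_mul_monomial_one_iff, tsub_le_iff_right]
  constructor
  · intro h c hc
    simpa using h (c + a) ⟨le_add_self, by simpa using hc⟩
  · rintro h b ⟨hab, hb⟩
    simpa [tsub_add_cancel_of_le hab] using h (b - a) hb

section StandardMonomials

variable [Finite σ]

noncomputable def standardMonomials (G : Set (σ →₀ ℕ)) (d : ℕ) : Finset (σ →₀ ℕ) :=
  ((Finsupp.finite_of_degree_eq d).subset fun _ hb => hb.1 :
    {b : σ →₀ ℕ | b.degree = d ∧ ∀ g ∈ G, ¬g ≤ b}.Finite).toFinset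

variable {G : Set (σ →₀ ℕ)} {d : ℕ}

@[simp]
theorem mem_standardMonomials {b : σ →₀ ℕ} :
    b ∈ standardMonomials G d ↔ b.degree = d ∧ ∀ g ∈ G, ¬g ≤ b := by
  simp [standardMonomials]

theorem filter_not_le_standardMonomials (a : σ →₀ ℕ) :
    (standardMonomials G d).filter (¬a ≤ ·) = standardMonomials (insert a G) d := by
  ext b
  simp only [Finset.mem_filter, mem_standardMonomials, Set.forall_mem_insert]
  tauto

theorem card_filter_le_standardMonomials (a : σ →₀ ℕ) :
    ((standardMonomials G d).filter (a ≤ ·)).card =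
      if a.degree ≤ d then (standardMonomials ((· - a) '' G) (d - a.degree)).card else 0 := by
  split_ifs with had
  · refine Finset.card_nbij' (· - a) (· + a) ?_ ?_ ?_ ?_
    · intro b hb
      simp only [Finset.coe_filter, mem_standardMonomials, Set.mem_ofPred_eq] at hb
      obtain ⟨⟨rfl, hbG⟩, hab⟩ := hb
      have hdeg := Finsupp.degree.map_add (b - a) a
      simp only [tsub_add_cancel_of_le hab] at hdeg
      simp only [Finset.mem_coe, mem_standardMonomials, Set.forall_mem_image, tsub_le_iff_right,
        tsub_add_cancel_of_le hab]
      exact ⟨by omega, hbG⟩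
    · intro c hc
      simp only [Finset.mem_coe, mem_standardMonomials, Set.forall_mem_image,
        tsub_le_iff_right] at hc
      simp only [Finset.coe_filter, mem_standardMonomials, Set.mem_ofPred_eq, map_add]
      exact ⟨⟨by omega, hc.2⟩, le_add_self⟩
    · intro b hb
      exact tsub_add_cancel_of_le (Finset.mem_filter.1 hb).2
    · intro c _
      exact add_tsub_cancel_right c a
  · refine Finset.card_eq_zero.2 (Finset.filter_eq_empty_iff.2 fun b hb hab => had ?_)
    exact (mem_standardMonomials.1 hb).1 ▸ Finsupp.degree_mono hab

theorem card_standardMonomials_eq_add (a : σ →₀ ℕ) :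
    (standardMonomials G d).card = (standardMonomials (insert a G) d).card +
      if a.degree ≤ d then (standardMonomials ((· - a) '' G) (d - a.degree)).card else 0 := by
  rw [← filter_not_le_standardMonomials, ← card_filter_le_standardMonomials, add_comm]
  exact (Finset.card_filter_add_card_filter_not _).symm

theorem IsHomogeneous.mem_monomialIdeal_iff {p : MvPolynomial σ R} (hp : p.IsHomogeneous d) :
    p ∈ monomialIdeal R G ↔ ∀ b ∈ standardMonomials G d, coeff b p = 0 := by
  rw [monomialIdeal, mem_ideal_span_monomial_image]
  constructor
  · intro h b hb
    by_contra hcoeff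
    obtain ⟨g, hg, hgb⟩ := h b (mem_support_iff.2 hcoeff)
    exact (mem_standardMonomials.1 hb).2 g hg hgb
  · intro h b hb
    by_contra! hbG
    have hdeg : b.degree = d := by
      rw [Finsupp.degree_eq_weight_one]
      exact hp (mem_support_iff.1 hb)
    exact mem_support_iff.1 hb (h b (mem_standardMonomials.2 ⟨hdeg, hbG⟩))

end StandardMonomials

end MvPolynomial

section HilbertSeries

variable {k : Type*} [Field k] {n : ℕ}

theorem gradedPieceDim_monomialIdeal (G : Set (Fin n →₀ ℕ)) (d : ℕ) :
    gradedPieceDim k (monomialIdeal k G) d = (standardMonomials G d).card := by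
  set V := homogeneousSubmodule (Fin n) k d
  let φ : V →ₗ[k] (standardMonomials G d → k) :=
    LinearMap.pi fun b => lcoeff k b.1 ∘ₗ V.subtype
  have hker :
      LinearMap.ker φ = Submodule.comap V.subtype ((monomialIdeal k G).restrictScalars k) := by
    ext p
    simp [φ, _root_.funext_iff, p.2.mem_monomialIdeal_iff]
  have hsurj : Function.Surjective φ := by
    intro f
    have hmem : ∑ b, monomial b.1 (f b) ∈ V :=
      Submodule.sum_mem _ fun b _ =>
        isHomogeneous_monomial _ (mem_standardMonomials.1 b.2).1
    refine ⟨⟨_, hmem⟩, funext fun b => ?_⟩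
    simp [φ, coeff_monomial]
  rw [gradedPieceDim, ← hker, (φ.quotKerEquivOfSurjective hsurj).finrank_eq,
    Module.finrank_fintype_fun_eq_card, Fintype.card_coe]

theorem hilbSeries_monomialIdeal_eq_add (G : Set (Fin n →₀ ℕ)) (a : Fin n →₀ ℕ) :
    hilbSeries k (monomialIdeal k G) = hilbSeries k (monomialIdeal k (insert a G)) +
      PowerSeries.X ^ a.degree * hilbSeries k (monomialIdeal k ((· - a) '' G)) := by
  ext d
  rw [map_add, PowerSeries.coeff_X_pow_mul']
  simp only [hilbSeries, PowerSeries.coeff_mk, gradedPieceDim_monomialIdeal,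
    card_standardMonomials_eq_add (G := G) a]
  split_ifs <;> push_cast <;> rfl

theorem hilbNum_monomialIdeal_insert (G : Set (Fin n →₀ ℕ)) (a : Fin n →₀ ℕ) :
    hilbNum k (monomialIdeal k (insert a G)) = hilbNum k (monomialIdeal k G) -
      PowerSeries.X ^ a.degree *
        hilbNum k ((monomialIdeal k G).colon (Ideal.span {monomial a (1 : k)})) := by
  rw [monomialIdeal_colon_monomial, hilbNum, hilbNum, hilbNum,
    hilbSeries_monomialIdeal_eq_add G a]
  ring

end HilbertSeries

/-- For a monomial ideal `I = (x^{A₀},…,x^{A_{r-1}})` one has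
`p(I) = p((x^{A₀})) − Σ_{i=1}^{r-1} t^{|A_i|} p((x^{A₀},…,x^{A_{i-1}}) : x^{A_i})`. -/
theorem hilbNum_monomial_ideal_recursion
    (k : Type*) [Field k] (n r : ℕ) (hr : 1 ≤ r)
    (A : ℕ → (Fin n →₀ ℕ)) :
    letI J : ℕ → Ideal (MvPolynomial (Fin n) k) := fun i =>
      Ideal.span {q | ∃ j < i, q = monomial (A j) (1 : k)}
    hilbNum k (J r) =
      hilbNum k (J 1) -
        ∑ i ∈ Finset.Ico 1 r,
          (PowerSeries.X : PowerSeries ℤ) ^ ((A i).sum fun _ e => e) *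
            hilbNum k (Submodule.colon (J i) (Ideal.span {monomial (A i) (1 : k)})) := by
  have hJ : ∀ i, Ideal.span {q | ∃ j < i, q = monomial (A j) (1 : k)} =
      monomialIdeal k (A '' Set.Iio i) := fun i => by
    simp only [monomialIdeal, Set.image_image]
    congr 1
    ext q
    simp [eq_comm]
  simp only [hJ]
  induction r, hr using Nat.le_induction with
  | base => simp
  | succ r hr ih =>
    have hinsert : A '' Set.Iio (r + 1) = insert (A r) (A '' Set.Iio r) := by
      rw [← Order.succ_eq_add_one, Order.Iio_succ_eq_insert, Set.image_insert_eq]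
    rw [Finset.sum_Ico_succ_top hr, ← sub_sub, ← ih, hinsert, hilbNum_monomialIdeal_insert]
    rfl
end

section
/- For h ≥ 2, the binomials p_1 = x_2x_3 − x_1x_4, p_2 = x_2^{2h} − x_3^{2h−1}, p_{3,j} = x_1^{j+1}x_3^{2h−j} − x_2^{j}x_4^{2h−j} (0 ≤ j ≤ 2h−1), p_{4,i} = x_1^{i+1}x_2^{2h−i} − x_3^{i−1}x_4^{2h−i} (1 ≤ i ≤ 2h), p_5 = x_3^{4h} − x_2^{2h−1}x_4^{2h+1}, p_{6,i} = x_1^{2+i}x_2^{2h−2−i}x_4^{2+i} − x_3^{2h+1+i} (0 ≤ i ≤ 2h−3), p_7 = x_1x_2^{2h−1}x_4 − x_3^{2h}, p_8 = x_1^{2h}x_4^{2h} − x_3^{4h−1} all lie in the kernel of the k-algebra map k[x_1,x_2,x_3,x_4] → k[t] given by x_1 ↦ t^{(2h−1)2h}, x_2 ↦ t^{(2h−1)(2h+1)}, x_3 ↦ t^{2h(2h+1)}, x_4 ↦ t^{2h(2h+1)+2h−1}. -/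
open MvPolynomial

/-- The Bresinsky binomials all lie in the toric ideal of the monomial curve
`(t^{(2h-1)2h}, t^{(2h-1)(2h+1)}, t^{2h(2h+1)}, t^{2h(2h+1)+2h-1})`. -/
theorem bresinsky_binomials_in_toric_ideal
    (k : Type*) [Field k] (h : ℕ) (hh : 2 ≤ h) :
    letI φ : MvPolynomial (Fin 4) k →ₐ[k] Polynomial k :=
      aeval ![Polynomial.X ^ ((2 * h - 1) * (2 * h)),
              Polynomial.X ^ ((2 * h - 1) * (2 * h + 1)),
              Polynomial.X ^ (2 * h * (2 * h + 1)),
              Polynomial.X ^ (2 * h * (2 * h + 1) + 2 * h - 1)]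
    letI x₁ : MvPolynomial (Fin 4) k := X 0
    letI x₂ : MvPolynomial (Fin 4) k := X 1
    letI x₃ : MvPolynomial (Fin 4) k := X 2
    letI x₄ : MvPolynomial (Fin 4) k := X 3
    φ (x₂ * x₃ - x₁ * x₄) = 0 ∧
    φ (x₂ ^ (2 * h) - x₃ ^ (2 * h - 1)) = 0 ∧
    (∀ j, j ≤ 2 * h - 1 →
      φ (x₁ ^ (j + 1) * x₃ ^ (2 * h - j) - x₂ ^ j * x₄ ^ (2 * h - j)) = 0) ∧
    (∀ i, 1 ≤ i → i ≤ 2 * h →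
      φ (x₁ ^ (i + 1) * x₂ ^ (2 * h - i) - x₃ ^ (i - 1) * x₄ ^ (2 * h - i)) = 0) ∧
    φ (x₃ ^ (4 * h) - x₂ ^ (2 * h - 1) * x₄ ^ (2 * h + 1)) = 0 ∧
    (∀ i, i ≤ 2 * h - 3 →
      φ (x₁ ^ (2 + i) * x₂ ^ (2 * h - 2 - i) * x₄ ^ (2 + i) - x₃ ^ (2 * h + 1 + i)) = 0) ∧
    φ (x₁ * x₂ ^ (2 * h - 1) * x₄ - x₃ ^ (2 * h)) = 0 ∧
    φ (x₁ ^ (2 * h) * x₄ ^ (2 * h) - x₃ ^ (4 * h - 1)) = 0 := by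
  have h1 : 1 ≤ 2 * h := by omega
  have h2 : 1 ≤ 2 * h * (2 * h + 1) + 2 * h := by nlinarith
  have h3 : 1 ≤ 4 * h := by omega
  refine ⟨?_, ?_, fun j hj => ?_, fun i hi1 hi2 => ?_, ?_, fun i hi => ?_, ?_, ?_⟩ <;>
    simp only [map_sub, map_mul, map_pow, aeval_X, Matrix.cons_val_zero, Matrix.cons_val_one,
      Matrix.head_cons, Matrix.cons_val_two, Matrix.tail_cons, Matrix.cons_val_three] <;>
    rw [sub_eq_zero] <;>
    simp only [← pow_mul, ← pow_add] <;>
    congr 1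
  case refine_3 => zify [h1, h2, h3, show j ≤ 2 * h from by omega]; ring
  case refine_4 => zify [h1, h2, h3, hi1, hi2]; ring
  case refine_6 =>
    zify [h1, h2, h3, show i ≤ 2 * h - 2 from by omega, show 2 ≤ 2 * h from by omega]; ring
  all_goals zify [h1, h2, h3]; ring
end

section
/- For h ≥ 2, the homogenized ideal of the Bresinsky curve (homogenization with respect to x_0) is generated by the 4h+3 polynomials p_1^H = x_2x_3 − x_1x_4, p_2^H = x_2^{2h} − x_0x_3^{2h−1}, p_{3,j}^H = x_1^{j+1}x_3^{2h−j} − x_0x_2^jx_4^{2h−j} (0 ≤ j ≤ 2h−1), p_{4,i}^H = x_1^{i+1}x_2^{2h−i} − x_0^2x_3^{i−1}x_4^{2h−i} (1 ≤ i ≤ 2h), and p_5^H = x_3^{4h} − x_2^{2h−1}x_4^{2h+1}. -/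
/-!
The ideal is the kernel of the monomial map `xᵢ ↦ s^{n₄-nᵢ} t^{nᵢ}`, and every generator is a
binomial `x^u - x^v` whose two monomials have the same image (same degree, same `t`-weight
`∑ uᵢ nᵢ`), so the generators lie in the kernel.

For the weight `(1, 2, 2, 0, 2)` each generator has a heavier term `x₁x₄`, `x₂^{2h}`,
`x₀x₂^jx₄^{2h-j}`, `x₁^{i+1}x₂^{2h-i}` or `x₂^{2h-1}x₄^{2h+1}`; replacing it by the lighter one
reduces every monomial, modulo the ideal generated, to a combination of standard monomials (those
divisible by none of these). It remains to see that distinct standard monomials have distinct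
images. Writing `N = 2h`, the `t`-weight of `x^a` is
`N(N+1) deg a - ((N+1)(N a₀ + a₁ + a₂) + (N-1)(a₁ - a₄))`. Since `N ± 1` are coprime, two exponents
of the same degree and weight differ by `m(N+1)` in `a₁ - a₄` and by `-m(N-1)` in `N a₀ + a₁ + a₂`;
the standardness inequalities force `m = 0`, and then the exponents agree.
-/

open MvPolynomial Finsupp

namespace MvPolynomial

variable {R σ τ : Type*}

theorem aeval_monomial_one_monomial [CommSemiring R] (e : σ → τ →₀ ℕ) (a : σ →₀ ℕ) (c : R) :
    aeval (fun i => monomial (e i) (1 : R)) (monomial a c) = monomial (weight e a) c := by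
  simp only [aeval_monomial, weight_apply, monomial_finsupp_sum_index, monomial_pow, one_pow]
  rfl

theorem eq_zero_of_aeval_monomial_eq_zero [CommSemiring R] {e : σ → τ →₀ ℕ} {N : Set (σ →₀ ℕ)}
    (hN : Set.InjOn (weight e) N) {q : MvPolynomial σ R} (hq : q ∈ restrictSupport R N)
    (h0 : aeval (fun i => monomial (e i) (1 : R)) q = 0) : q = 0 := by
  classical
  rw [mem_restrictSupport_iff] at hq
  have hsum : aeval (fun i => monomial (e i) (1 : R)) q =
      ∑ b ∈ q.support, monomial (weight e b) (coeff b q) := by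
    conv_lhs => rw [← support_sum_monomial_coeff q]
    simp only [map_sum, aeval_monomial_one_monomial]
  ext a
  by_cases ha : a ∈ q.support
  · have := congrArg (coeff (weight e a)) (hsum.symm.trans h0)
    rwa [coeff_sum, Finset.sum_eq_single_of_mem a ha fun b hb hba => ?_, coeff_monomial,
      if_pos rfl] at this
    rw [coeff_monomial, if_neg fun hw => hba (hN (hq hb) (hq ha) hw)]
  · exact notMem_support_iff.mp ha

theorem monomial_mem_sup_restrictSupport [CommRing R] (I : Ideal (MvPolynomial σ R))
    {N : Set (σ →₀ ℕ)} (w : σ → ℕ)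
    (hred : ∀ a ∉ N, ∃ l t, l ≤ a ∧ weight w t < weight w l ∧
      monomial l (1 : R) - monomial t 1 ∈ I)
    (a : σ →₀ ℕ) : monomial a (1 : R) ∈ I.restrictScalars R ⊔ restrictSupport R N := by
  induction hwa : weight w a using Nat.strong_induction_on generalizing a with
  | _ n ih =>
  by_cases ha : a ∈ N
  · exact Submodule.mem_sup_right ((monomial_mem_restrictSupport R).2 (Or.inl ha))
  obtain ⟨l, t, hla, hw, hlt⟩ := hred a ha
  have hsplit : monomial a (1 : R) =
      monomial (a - l) 1 * (monomial l 1 - monomial t 1) + monomial (a - l + t) 1 := by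
    rw [mul_sub, monomial_mul, monomial_mul, tsub_add_cancel_of_le hla, mul_one, sub_add_cancel]
  have hwa' : weight w (a - l) + weight w l = n := by
    rw [← map_add, tsub_add_cancel_of_le hla, hwa]
  rw [hsplit]
  refine add_mem (Submodule.mem_sup_left (I.mul_mem_left _ hlt)) (ih _ ?_ _ rfl)
  rw [map_add]
  omega

theorem ker_aeval_monomial_eq [CommRing R] (e : σ → τ →₀ ℕ) (I : Ideal (MvPolynomial σ R))
    (N : Set (σ →₀ ℕ)) (w : σ → ℕ)
    (hI : I ≤ RingHom.ker (aeval fun i => monomial (e i) (1 : R)))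
    (hred : ∀ a ∉ N, ∃ l t, l ≤ a ∧ weight w t < weight w l ∧
      monomial l (1 : R) - monomial t 1 ∈ I)
    (hN : Set.InjOn (weight e) N) :
    RingHom.ker (aeval fun i => monomial (e i) (1 : R)) = I := by
  have hspan (q : MvPolynomial σ R) : q ∈ I.restrictScalars R ⊔ restrictSupport R N := by
    induction q using MvPolynomial.induction_on' with
    | monomial a c =>
      rw [← mul_one c, ← smul_eq_mul, ← smul_monomial]
      exact Submodule.smul_mem _ _ (monomial_mem_sup_restrictSupport I w hred a)
    | add p q hp hq => exact add_mem hp hq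
  refine le_antisymm (fun q hq => ?_) hI
  obtain ⟨p, hp, r, hr, rfl⟩ := Submodule.mem_sup.1 (hspan q)
  have hr0 : r = 0 := by
    refine eq_zero_of_aeval_monomial_eq_zero hN hr ?_
    rwa [RingHom.mem_ker, map_add, RingHom.mem_ker.1 (hI hp), zero_add] at hq
  rw [hr0, add_zero]
  exact hp

theorem monomial_equivFunOnFinite_symm [CommSemiring R] [Fintype σ] (e : σ → ℕ) :
    monomial (equivFunOnFinite.symm e) (1 : R) = ∏ i, X i ^ e i := by
  rw [monomial_eq, C_1, one_mul, Finsupp.prod_fintype _ _ fun _ => pow_zero _]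
  rfl

end MvPolynomial

theorem Nat.eq_and_eq_of_mul_add_eq_mul_add {N x y r s : ℕ} (hr : r < N) (hs : s < N)
    (h : N * x + r = N * y + s) : x = y ∧ r = s := by
  obtain ⟨hx, hr'⟩ := (Nat.div_mod_unique (b := N) (a := N * x + r) (d := x) (c := r)
    (by omega)).2 ⟨by ring, hr⟩
  obtain ⟨hy, hs'⟩ := (Nat.div_mod_unique (b := N) (a := N * x + r) (d := y) (c := s)
    (by omega)).2 ⟨by rw [h]; ring, hs⟩
  omega

namespace Bresinsky

variable (k : Type*) [CommRing k] {h : ℕ}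

def n (h : ℕ) : Fin 5 → ℕ :=
  ![0, (2 * h - 1) * (2 * h), (2 * h - 1) * (2 * h + 1), 2 * h * (2 * h + 1),
    2 * h * (2 * h + 1) + 2 * h - 1]

noncomputable def exponent (h : ℕ) (i : Fin 5) : Fin 2 →₀ ℕ :=
  single 0 (n h 4 - n h i) + single 1 (n h i)

theorem intCast_n (hh : 1 ≤ h) (i : Fin 5) :
    (n h i : ℤ) = ![0, (2 * (h : ℤ) - 1) * (2 * h), (2 * (h : ℤ) - 1) * (2 * h + 1),
      2 * (h : ℤ) * (2 * h + 1), 2 * (h : ℤ) * (2 * h + 1) + 2 * h - 1] i := by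
  have h1 : 1 ≤ 2 * h := by omega
  have h2 : 1 ≤ 2 * h * (2 * h + 1) + 2 * h := by omega
  fin_cases i <;> simp [n, Nat.cast_sub h1, Nat.cast_sub h2]

theorem n_le_n_four (hh : 1 ≤ h) (i : Fin 5) : n h i ≤ n h 4 := by
  rw [← Nat.cast_le (α := ℤ), intCast_n hh, intCast_n hh]
  have : (1 : ℤ) ≤ h := by exact_mod_cast hh
  fin_cases i <;> simp <;> nlinarith

theorem weight_exponent (a : Fin 5 →₀ ℕ) : weight (exponent h) a =
    single 0 (weight (fun i => n h 4 - n h i) a) + single 1 (weight (n h) a) := by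
  simp only [weight_eq_sum, exponent, smul_add, smul_single, Finset.sum_add_distrib,
    single_finsetSum]

theorem weight_exponent_eq_iff (hh : 1 ≤ h) {a b : Fin 5 →₀ ℕ} :
    weight (exponent h) a = weight (exponent h) b ↔
      degree a = degree b ∧ weight (n h) a = weight (n h) b := by
  have hsum (c : Fin 5 →₀ ℕ) :
      weight (fun i => n h 4 - n h i) c + weight (n h) c = n h 4 * degree c := by
    simp only [weight_eq_sum, degree_eq_sum, smul_eq_mul, ← Finset.sum_add_distrib,
      Finset.mul_sum]
    exact Finset.sum_congr rfl fun i _ => by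
      rw [← mul_add, Nat.sub_add_cancel (n_le_n_four hh i), mul_comm]
  have hpos : 0 < n h 4 := by simp [n]; omega
  have ha := hsum a
  have hb := hsum b
  simp only [weight_exponent, Finsupp.ext_iff, Fin.forall_fin_two, Finsupp.add_apply,
    single_apply, Fin.isValue, ↓reduceIte, add_zero, one_ne_zero, zero_ne_one, zero_add]
  constructor
  · rintro ⟨h0, h1⟩
    exact ⟨Nat.eq_of_mul_eq_mul_left hpos (by omega), h1⟩
  · rintro ⟨hd, h1⟩
    rw [hd] at ha
    omega

def exponentPairs (h : ℕ) : Set ((Fin 5 → ℕ) × (Fin 5 → ℕ)) :=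
  {p | p = (![0, 0, 1, 1, 0], ![0, 1, 0, 0, 1]) ∨
    p = (![0, 0, 2 * h, 0, 0], ![1, 0, 0, 2 * h - 1, 0]) ∨
    (∃ j ≤ 2 * h - 1, p = (![0, j + 1, 0, 2 * h - j, 0], ![1, 0, j, 0, 2 * h - j])) ∨
    (∃ i, 1 ≤ i ∧ i ≤ 2 * h ∧
      p = (![0, i + 1, 2 * h - i, 0, 0], ![2, 0, 0, i - 1, 2 * h - i])) ∨
    p = (![0, 0, 0, 4 * h, 0], ![0, 0, 2 * h - 1, 0, 2 * h + 1])}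

noncomputable def binomial (p : (Fin 5 → ℕ) × (Fin 5 → ℕ)) : MvPolynomial (Fin 5) k :=
  monomial (equivFunOnFinite.symm p.1) 1 - monomial (equivFunOnFinite.symm p.2) 1

theorem binomial_image_exponentPairs :
    binomial k '' exponentPairs h =
      {q | q = X 2 * X 3 - X 1 * X 4 ∨
        q = X 2 ^ (2 * h) - X 0 * X 3 ^ (2 * h - 1) ∨
        (∃ j, j ≤ 2 * h - 1 ∧
          q = X 1 ^ (j + 1) * X 3 ^ (2 * h - j) - X 0 * X 2 ^ j * X 4 ^ (2 * h - j)) ∨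
        (∃ i, 1 ≤ i ∧ i ≤ 2 * h ∧
          q = X 1 ^ (i + 1) * X 2 ^ (2 * h - i) - X 0 ^ 2 * X 3 ^ (i - 1) * X 4 ^ (2 * h - i)) ∨
        q = X 3 ^ (4 * h) - X 2 ^ (2 * h - 1) * X 4 ^ (2 * h + 1)} := by
  ext q
  simp only [exponentPairs, Set.mem_image, Set.mem_ofPred_eq, or_and_right, exists_or,
    exists_eq_left]
  simp [binomial, monomial_equivFunOnFinite_symm, Fin.prod_univ_five, eq_comm, and_assoc]

theorem degree_eq_and_weight_eq_of_mem_exponentPairs (hh : 1 ≤ h)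
    {p : (Fin 5 → ℕ) × (Fin 5 → ℕ)} (hp : p ∈ exponentPairs h) :
    degree (equivFunOnFinite.symm p.1) = degree (equivFunOnFinite.symm p.2) ∧
      weight (n h) (equivFunOnFinite.symm p.1) = weight (n h) (equivFunOnFinite.symm p.2) := by
  simp only [degree_eq_sum, ← Nat.cast_inj (R := ℤ), weight_eq_sum, Fin.sum_univ_five,
    smul_eq_mul, Nat.cast_add, Nat.cast_mul, intCast_n hh]
  rcases hp with rfl | rfl | ⟨j, hj, rfl⟩ | ⟨i, hi, hi', rfl⟩ | rfl <;> constructor <;>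
    simp (disch := omega) [Nat.cast_sub] <;> ring

theorem span_binomial_le_ker (hh : 1 ≤ h) :
    Ideal.span (binomial k '' exponentPairs h) ≤
      RingHom.ker (aeval fun i => monomial (exponent h i) (1 : k)) := by
  rw [Ideal.span_le]
  rintro _ ⟨p, hp, rfl⟩
  rw [SetLike.mem_coe, RingHom.mem_ker, binomial, map_sub, aeval_monomial_one_monomial,
    aeval_monomial_one_monomial,
    (weight_exponent_eq_iff hh).2 (degree_eq_and_weight_eq_of_mem_exponentPairs hh hp), sub_self]

/-- Not divisible by any of the leading monomials `x₁x₄`, `x₂^{2h}`, `x₀x₂^jx₄^{2h-j}`,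
`x₁^{i+1}x₂^{2h-i}`, `x₂^{2h-1}x₄^{2h+1}`. -/
def IsStandard (h : ℕ) (a : Fin 5 →₀ ℕ) : Prop :=
  (a 1 = 0 ∨ a 4 = 0) ∧ a 2 < 2 * h ∧ (1 ≤ a 0 → 1 ≤ a 4 → a 2 + a 4 < 2 * h) ∧
    (2 ≤ a 1 → a 1 + a 2 ≤ 2 * h) ∧ (2 * h ≤ a 2 + 1 → a 4 ≤ 2 * h)

theorem exists_reduction_of_not_isStandard (hh : 1 ≤ h) {a : Fin 5 →₀ ℕ} (ha : ¬IsStandard h a) :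
    ∃ l t, l ≤ a ∧ weight ![1, 2, 2, 0, 2] t < weight ![1, 2, 2, 0, 2] l ∧
      monomial l (1 : k) - monomial t 1 ∈ Ideal.span (binomial k '' exponentPairs h) := by
  have mem {p} (hp : p ∈ exponentPairs h) : monomial (equivFunOnFinite.symm p.1) (1 : k) -
      monomial (equivFunOnFinite.symm p.2) 1 ∈ Ideal.span (binomial k '' exponentPairs h) :=
    Ideal.subset_span ⟨p, hp, rfl⟩
  simp only [IsStandard, not_and_or, not_or, Classical.not_imp, not_lt, not_le] at ha
  rcases ha with ⟨h1, h4⟩ | h2 | ⟨h0, h4, h24⟩ | ⟨h1, h12⟩ | ⟨h2, h4⟩ <;>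
  [refine ⟨_, _, ?_, ?_, sub_mem_comm_iff.1 (mem (Or.inl rfl))⟩;
    refine ⟨_, _, ?_, ?_, mem (Or.inr (Or.inl rfl))⟩;
    refine ⟨_, _, ?_, ?_, sub_mem_comm_iff.1 (mem (Or.inr (Or.inr (Or.inl
      ⟨min (a 2) (2 * h - 1), min_le_right _ _, rfl⟩))))⟩;
    refine ⟨_, _, ?_, ?_, mem (Or.inr (Or.inr (Or.inr (Or.inl
      ⟨min (a 1 - 1) (2 * h), by omega, min_le_right _ _, rfl⟩))))⟩;
    refine ⟨_, _, ?_, ?_, sub_mem_comm_iff.1 (mem (Or.inr (Or.inr (Or.inr (Or.inr rfl)))))⟩] <;>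
  simp [Finsupp.le_def, Fin.forall_fin_succ, weight_eq_sum, Fin.sum_univ_five] <;> omega

def level (h : ℕ) (a : Fin 5 →₀ ℕ) : ℤ := 2 * h * a 0 + a 1 + a 2

def tilt (a : Fin 5 →₀ ℕ) : ℤ := a 1 - a 4

theorem intCast_weight_n (hh : 1 ≤ h) (a : Fin 5 →₀ ℕ) :
    (weight (n h) a : ℤ) =
      2 * h * (2 * h + 1) * degree a - ((2 * h + 1) * level h a + (2 * h - 1) * tilt a) := by
  simp [weight_eq_sum, degree_eq_sum, Fin.sum_univ_five, intCast_n hh, level, tilt]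
  ring

variable {a b : Fin 5 →₀ ℕ}

theorem IsStandard.eq_of_tilt_eq_of_level_eq (ha : IsStandard h a) (hb : IsStandard h b)
    (ht : tilt a = tilt b) (hl : level h a = level h b) :
    a 0 = b 0 ∧ a 1 = b 1 ∧ a 2 = b 2 ∧ a 4 = b 4 := by
  obtain ⟨ha1, ha2, -⟩ := ha
  obtain ⟨hb1, hb2, -⟩ := hb
  simp only [tilt, level] at ht hl
  have h14 : a 1 = b 1 ∧ a 4 = b 4 := by omega
  have h02 : 2 * h * a 0 + a 2 = 2 * h * b 0 + b 2 := by
    zify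
    linarith
  obtain ⟨h0, h2⟩ := Nat.eq_and_eq_of_mul_add_eq_mul_add ha2 hb2 h02
  exact ⟨h0, h14.1, h2, h14.2⟩

theorem IsStandard.shift_nonpos (hh : 1 ≤ h) (ha : IsStandard h a) (hb : IsStandard h b)
    {m : ℤ} (ht : tilt b = tilt a + (2 * h + 1) * m)
    (hl : level h a = level h b + (2 * h - 1) * m) : m ≤ 0 := by
  by_contra! hm
  obtain ⟨ha1, ha2, ha3, ha4, ha5⟩ := ha
  obtain ⟨hb1, hb2, hb3, hb4, hb5⟩ := hb
  simp only [tilt, level] at ht hl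
  have hb0 : 0 ≤ 2 * (h : ℤ) * b 0 := by positivity
  have hM : 2 * (h : ℤ) + 1 ≤ (2 * h + 1) * m := le_mul_of_one_le_right (by positivity) hm
  have hM' : 2 * (h : ℤ) - 1 ≤ (2 * h - 1) * m := le_mul_of_one_le_right (by omega) hm
  have hM2 : 2 ≤ m →
      2 * (2 * (h : ℤ) + 1) ≤ (2 * h + 1) * m ∧ 2 * (2 * (h : ℤ) - 1) ≤ (2 * h - 1) * m :=
    fun hm2 => ⟨by nlinarith, by nlinarith⟩
  rcases Nat.eq_zero_or_pos (a 0) with ha0 | ha0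
  · rw [ha0] at hl
    obtain rfl : m = 1 := by omega
    omega
  · obtain rfl : m = 1 := by omega
    have h02 : 2 * h * a 0 + (a 2 + a 4) = 2 * h * (b 0 + 2) + b 2 := by
      have : 2 * (h : ℤ) * (b 0 + 2) = 2 * h * b 0 + 4 * h := by ring
      zify
      omega
    have := (Nat.eq_and_eq_of_mul_add_eq_mul_add (by omega) hb2 h02).2
    omega

theorem IsStandard.eq_of_degree_eq_of_weight_eq (hh : 1 ≤ h) (ha : IsStandard h a)
    (hb : IsStandard h b) (hd : degree a = degree b) (hw : weight (n h) a = weight (n h) b) :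
    a = b := by
  have hab : (2 * h + 1) * level h a + (2 * h - 1) * tilt a =
      (2 * h + 1) * level h b + (2 * h - 1) * tilt b := by
    have := congrArg (Nat.cast : ℕ → ℤ) hw
    rw [intCast_weight_n hh, intCast_weight_n hh, hd] at this
    linarith
  have hcop : IsCoprime (2 * (h : ℤ) + 1) (2 * h - 1) := ⟨1 - h, h, by ring⟩
  obtain ⟨m, hm⟩ : 2 * (h : ℤ) + 1 ∣ tilt b - tilt a :=
    hcop.dvd_of_dvd_mul_right ⟨level h a - level h b, by linear_combination -hab⟩
  have hl : level h a = level h b + (2 * h - 1) * m :=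
    mul_left_cancel₀ (by omega : 2 * (h : ℤ) + 1 ≠ 0) (by linear_combination hab + (2 * h - 1) * hm)
  obtain rfl : m = 0 := le_antisymm (ha.shift_nonpos hh hb (by linear_combination hm) hl)
    (neg_nonpos.1 (hb.shift_nonpos hh ha (by linear_combination -hm) (by linear_combination -hl)))
  obtain ⟨h0, h1, h2, h4⟩ :=
    ha.eq_of_tilt_eq_of_level_eq hb (by linear_combination -hm) (by linear_combination hl)
  have h3 : a 3 = b 3 := by
    simp only [degree_eq_sum, Fin.sum_univ_five] at hd
    omega
  ext i
  fin_cases i <;> assumption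

theorem injOn_weight_exponent (hh : 1 ≤ h) :
    Set.InjOn (weight (exponent h)) {a | IsStandard h a} := fun _ ha _ hb hab =>
  ha.eq_of_degree_eq_of_weight_eq hh hb ((weight_exponent_eq_iff hh).1 hab).1
    ((weight_exponent_eq_iff hh).1 hab).2

end Bresinsky

/-- For `h ≥ 2`, the homogenized toric ideal of the Bresinsky curve (the
defining ideal of its projective closure, realized as the kernel of
`x₀ ↦ s^{n₄}`, `x_i ↦ s^{n₄-n_i} t^{n_i}`) is generated by the `4h+3`
polynomials `p₁ᴴ, p₂ᴴ, p₃ⱼᴴ, p₄ᵢᴴ, p₅ᴴ`. -/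
theorem bresinsky_homogenized_ideal_generators
    (k : Type*) [Field k] (h : ℕ) (hh : 2 ≤ h) :
    letI n₁ : ℕ := (2 * h - 1) * (2 * h)
    letI n₂ : ℕ := (2 * h - 1) * (2 * h + 1)
    letI n₃ : ℕ := 2 * h * (2 * h + 1)
    letI n₄ : ℕ := 2 * h * (2 * h + 1) + 2 * h - 1
    letI s : MvPolynomial (Fin 2) k := X 0
    letI t : MvPolynomial (Fin 2) k := X 1
    letI QH : Ideal (MvPolynomial (Fin 5) k) :=
      RingHom.ker (aeval (R := k)
        ![s ^ n₄, s ^ (n₄ - n₁) * t ^ n₁, s ^ (n₄ - n₂) * t ^ n₂,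
          s ^ (n₄ - n₃) * t ^ n₃, t ^ n₄]).toRingHom
    letI x₀ : MvPolynomial (Fin 5) k := X 0
    letI x₁ : MvPolynomial (Fin 5) k := X 1
    letI x₂ : MvPolynomial (Fin 5) k := X 2
    letI x₃ : MvPolynomial (Fin 5) k := X 3
    letI x₄ : MvPolynomial (Fin 5) k := X 4
    letI S : Set (MvPolynomial (Fin 5) k) :=
      {q | q = x₂ * x₃ - x₁ * x₄ ∨
        q = x₂ ^ (2 * h) - x₀ * x₃ ^ (2 * h - 1) ∨
        (∃ j, j ≤ 2 * h - 1 ∧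
          q = x₁ ^ (j + 1) * x₃ ^ (2 * h - j) - x₀ * x₂ ^ j * x₄ ^ (2 * h - j)) ∨
        (∃ i, 1 ≤ i ∧ i ≤ 2 * h ∧
          q = x₁ ^ (i + 1) * x₂ ^ (2 * h - i) - x₀ ^ 2 * x₃ ^ (i - 1) * x₄ ^ (2 * h - i)) ∨
        q = x₃ ^ (4 * h) - x₂ ^ (2 * h - 1) * x₄ ^ (2 * h + 1)}
    QH = Ideal.span S := by
  have hh1 : 1 ≤ h := by omega
  rw [← Bresinsky.binomial_image_exponentPairs]
  refine (congrArg (fun v => RingHom.ker (aeval (R := k) v).toRingHom) ?_).trans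
    (ker_aeval_monomial_eq (Bresinsky.exponent h) _ {a | Bresinsky.IsStandard h a}
      ![1, 2, 2, 0, 2] (Bresinsky.span_binomial_le_ker k hh1)
      (fun _ ha => Bresinsky.exists_reduction_of_not_isStandard k hh1 ha)
      (Bresinsky.injOn_weight_exponent hh1))
  ext1 i
  fin_cases i <;> simp [Bresinsky.exponent, Bresinsky.n, X_pow_eq_monomial, monomial_mul]
end
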